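/- Let F_q be a finite field and v₁, v₂ ∈ F_q^*. Let J_{GH,v} denote the set of j-invariants of generalized Hessian curves E_{GH,u,v} as u ranges over {u ∈ F_q : u^3 ≠ 27v}. If v₁/v₂ is a cube in F_q then J_{GH,v₁} = J_{GH,v₂}; if v₁/v₂ is not a cube then J_{GH,v₁} ∩ J_{GH,v₂} ⊆ {0}. -/

import Mathlib

/-! The substitution `(X, Y) ↦ (ζX, ζY)` identifies `E_{GH,ζu,ζ³v}` with `E_{GH,u,v}`, so
multiplying `v` by a nonzero cube does not change the set of `j`-invariants. Conversely a nonzero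
`j = A³/v` determines `v = A³/j` up to a cube, so two constants sharing a nonzero `j`-invariant
differ by a cube. -/

/-- The set of `j`-invariants of generalized Hessian curves `X³+Y³+v = uXY` over `F_q`. -/
def genHessianJSet (F : Type*) [Field F] (v : F) : Set F :=
  {j : F | ∃ u : F, u ^ 3 ≠ 27 * v ∧
    j = (1 / v) * (u * (u ^ 3 + 216 * v) / (u ^ 3 - 27 * v)) ^ 3}

section

variable {F : Type*} [Field F]

theorem genHessianJSet_cube_mul {ζ : F} (hζ : ζ ≠ 0) (v : F) :
    genHessianJSet F (ζ ^ 3 * v) = genHessianJSet F v := by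
  ext j
  simp only [genHessianJSet, Set.mem_ofPred_eq]
  rw [← (Equiv.mulLeft₀ ζ hζ).exists_congr_right]
  refine exists_congr fun w => and_congr ?_ (Eq.congr_right ?_)
  · rw [Equiv.mulLeft₀_apply, mul_pow, mul_left_comm, ne_eq, mul_right_inj' (pow_ne_zero 3 hζ)]
  · simp only [Equiv.mulLeft₀_apply]
    field_simp

theorem eq_cube_div_of_mem_genHessianJSet {v j : F} (hj : j ≠ 0) (h : j ∈ genHessianJSet F v) :
    ∃ A : F, v = A ^ 3 / j := by
  obtain ⟨u, -, rfl⟩ := h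
  set A := u * (u ^ 3 + 216 * v) / (u ^ 3 - 27 * v)
  have hv : v ≠ 0 := by rintro rfl; simp at hj
  have hA : A ≠ 0 := by rintro hA; simp [hA] at hj
  exact ⟨A, by field_simp⟩

theorem exists_cube_eq_div_of_mem_genHessianJSet {v₁ v₂ j : F} (hj : j ≠ 0)
    (h₁ : j ∈ genHessianJSet F v₁) (h₂ : j ∈ genHessianJSet F v₂) :
    ∃ ζ : F, ζ ^ 3 = v₁ / v₂ := by
  obtain ⟨A, rfl⟩ := eq_cube_div_of_mem_genHessianJSet hj h₁
  obtain ⟨B, rfl⟩ := eq_cube_div_of_mem_genHessianJSet hj h₂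
  exact ⟨A / B, by rw [div_div_div_cancel_right₀ hj, div_pow]⟩

end

theorem generalized_hessian_j_sets_general
    (F : Type*) [Field F] (v₁ v₂ : F) (hv₁ : v₁ ≠ 0) (hv₂ : v₂ ≠ 0) :
    ((∃ ζ : F, ζ ^ 3 = v₁ / v₂) → genHessianJSet F v₁ = genHessianJSet F v₂) ∧
    (¬(∃ ζ : F, ζ ^ 3 = v₁ / v₂) →
      genHessianJSet F v₁ ∩ genHessianJSet F v₂ ⊆ {0}) := by
  refine ⟨fun ⟨ζ, hζ⟩ => ?_, fun hnc j ⟨h₁, h₂⟩ => ?_⟩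
  · have hζ0 : ζ ≠ 0 := by rintro rfl; simpa [hv₁, hv₂] using hζ.symm
    rw [(div_eq_iff hv₂).mp hζ.symm, genHessianJSet_cube_mul hζ0]
  · by_contra hj
    exact hnc (exists_cube_eq_div_of_mem_genHessianJSet hj h₁ h₂)

/-- If `v₁/v₂` is a cube in `F_q`, the `j`-invariant sets of generalized Hessian curves with
constants `v₁`, `v₂` coincide; otherwise they intersect in at most `{0}`. -/
theorem generalized_hessian_j_sets
    (F : Type*) [Field F] [Fintype F] (v₁ v₂ : F) (hv₁ : v₁ ≠ 0) (hv₂ : v₂ ≠ 0) :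
    ((∃ ζ : F, ζ ^ 3 = v₁ / v₂) → genHessianJSet F v₁ = genHessianJSet F v₂) ∧
    (¬(∃ ζ : F, ζ ^ 3 = v₁ / v₂) →
      genHessianJSet F v₁ ∩ genHessianJSet F v₂ ⊆ {0}) :=
  generalized_hessian_j_sets_general F v₁ v₂ hv₁ hv₂
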